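/- Let T = Σ_{j,k,ℓ ∈ {x,y,z}} ε_{jkℓ} s_j ⊗ s_k ⊗ s_ℓ on (ℂ²)^⊗3, and let τ_y = I/2 + s_y and τ_z = I/2 + s_z. Then for every 2×2 complex matrix ρ, all of the following first-order changes vanish exactly: Tr[(s_x ⊗ I ⊗ I)·[T, ρ ⊗ τ_y ⊗ τ_z]] = 0; Tr[(I ⊗ s_x ⊗ I)·[T, ρ ⊗ τ_y ⊗ τ_z]] = 0; Tr[(I ⊗ s_y ⊗ I)·[T, ρ ⊗ τ_y ⊗ τ_z]] = 0; Tr[(I ⊗ I ⊗ s_x)·[T, ρ ⊗ τ_y ⊗ τ_z]] = 0; and Tr[(I ⊗ I ⊗ s_z)·[T, ρ ⊗ τ_y ⊗ τ_z]] = 0. That is, to first order the system's x-spin is unchanged, the first reference spin only picks up z-spin, and the second reference spin only picks up y-spin. -/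

import Mathlib

open Matrix Kronecker
open scoped ComplexOrder

noncomputable section

/-- Pauli matrices -/
def σx : Matrix (Fin 2) (Fin 2) ℂ := !![0, 1; 1, 0]
def σy : Matrix (Fin 2) (Fin 2) ℂ := !![0, -Complex.I; Complex.I, 0]
def σz : Matrix (Fin 2) (Fin 2) ℂ := !![1, 0; 0, -1]

/-- spin operators `s_x, s_y, s_z` (with ℏ = 1), indexed by `0 = x`, `1 = y`, `2 = z`. -/
def spin : Fin 3 → Matrix (Fin 2) (Fin 2) ℂ := fun j => (2 : ℂ)⁻¹ • (![σx, σy, σz] j)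

/-- Levi-Civita symbol on indices `0,1,2` (i.e. `x,y,z`). -/
def εLC (j k l : Fin 3) : ℂ :=
  ((((k : ℤ) - (j : ℤ)) * (((l : ℤ) - (j : ℤ)) * ((l : ℤ) - (k : ℤ))) : ℤ) : ℂ) / 2

/-- The rotationally invariant 3-qubit interaction `T = Σ ε_{jkl} s_j ⊗ s_k ⊗ s_l`. -/
def T : Matrix ((Fin 2 × Fin 2) × Fin 2) ((Fin 2 × Fin 2) × Fin 2) ℂ :=
  ∑ j : Fin 3, ∑ k : Fin 3, ∑ l : Fin 3, εLC j k l • (spin j ⊗ₖ spin k ⊗ₖ spin l)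

/-- Total spin component `S_k^tot` on three qubits. -/
def Stot (k : Fin 3) : Matrix ((Fin 2 × Fin 2) × Fin 2) ((Fin 2 × Fin 2) × Fin 2) ℂ :=
  spin k ⊗ₖ (1 : Matrix (Fin 2) (Fin 2) ℂ) ⊗ₖ (1 : Matrix (Fin 2) (Fin 2) ℂ)
    + (1 : Matrix (Fin 2) (Fin 2) ℂ) ⊗ₖ spin k ⊗ₖ (1 : Matrix (Fin 2) (Fin 2) ℂ)
    + (1 : Matrix (Fin 2) (Fin 2) ℂ) ⊗ₖ (1 : Matrix (Fin 2) (Fin 2) ℂ) ⊗ₖ spin k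

/-- `τ_j = I/2 + s_j`, the density matrix of a spin-1/2 particle polarized in the `+j` direction. -/
def τ (j : Fin 3) : Matrix (Fin 2) (Fin 2) ℂ := (2 : ℂ)⁻¹ • 1 + spin j

/-- Partial trace over the second and third tensor factors. -/
def ptraceR (M : Matrix ((Fin 2 × Fin 2) × Fin 2) ((Fin 2 × Fin 2) × Fin 2) ℂ) :
    Matrix (Fin 2) (Fin 2) ℂ :=
  Matrix.of fun i j => ∑ b : Fin 2, ∑ c : Fin 2, M ((i, b), c) ((j, b), c)

/-- Trace norm `‖A‖₁ = Tr √(A†A)`. -/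
def traceNorm {n : Type*} [Fintype n] [DecidableEq n] (A : Matrix n n ℂ) : ℝ :=
  (((Matrix.posSemidef_conjTranspose_mul_self A).1.eigenvectorUnitary.1 *
      diagonal (fun i => ((√((Matrix.posSemidef_conjTranspose_mul_self A).1.eigenvalues i) : ℝ) : ℂ)) *
      (star (Matrix.posSemidef_conjTranspose_mul_self A).1.eigenvectorUnitary :
        Matrix n n ℂ)).trace).re


/-!
Moving the commutator onto the observable, `Tr(O [T, R]) = Tr(T [R, O])`. For an observable `O`
acting on one site, `[R, O]` is again a product `P ⊗ Q ⊗ W` with the commutator in that site, and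
`Tr(T (P ⊗ Q ⊗ W)) = Σ ε_{jkℓ} Tr(s_j P) Tr(s_k Q) Tr(s_ℓ W)`. Since `Tr(s_k τ_a) = 0` for
`k ≠ a`, and `[τ_a, s_b] = [s_a, s_b]` is trace-orthogonal to `s_a` and `s_b` by cyclicity, the
last two factors pin `k` and `ℓ`. Either they are pinned to the same index and `ε` kills the sum,
or (for `O = s_x ⊗ I ⊗ I`) only `Tr(s_x [ρ, s_x]) = 0` survives; for `O = I ⊗ s_y ⊗ I` and
`O = I ⊗ I ⊗ s_z` the commutator `[R, O]` is already zero.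
-/

section Commutators

variable {R : Type*} [CommRing R] {l m n : Type*} [Fintype l] [Fintype m] [Fintype n]

theorem Matrix.trace_mul_commutator_comm (O T ρ : Matrix n n R) :
    (O * (T * ρ - ρ * T)).trace = (T * (ρ * O - O * ρ)).trace := by
  simp only [Matrix.mul_sub, Matrix.trace_sub, ← Matrix.mul_assoc]
  rw [trace_mul_cycle O ρ T, ← trace_mul_cycle T ρ O]

theorem Matrix.trace_mul_commutator_left_self (A B : Matrix n n R) :
    (A * (A * B - B * A)).trace = 0 := by
  rw [Matrix.mul_sub, Matrix.trace_sub, ← Matrix.mul_assoc, ← Matrix.mul_assoc,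
    trace_mul_cycle A B A, sub_self]

theorem Matrix.trace_mul_commutator_right_self (A B : Matrix n n R) :
    (B * (A * B - B * A)).trace = 0 := by
  rw [Matrix.mul_sub, Matrix.trace_sub, ← Matrix.mul_assoc, ← Matrix.mul_assoc,
    trace_mul_cycle B A B, sub_self]

theorem Matrix.kronecker_commutator_fst [DecidableEq m] [DecidableEq n]
    (A X : Matrix l l R) (B : Matrix m m R) (C : Matrix n n R) :
    (A ⊗ₖ B ⊗ₖ C) * (X ⊗ₖ 1 ⊗ₖ 1) - (X ⊗ₖ 1 ⊗ₖ 1) * (A ⊗ₖ B ⊗ₖ C)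
      = (A * X - X * A) ⊗ₖ B ⊗ₖ C := by
  simp only [← mul_kronecker_mul, Matrix.mul_one, Matrix.one_mul]
  ext ⟨⟨_, _⟩, _⟩ ⟨⟨_, _⟩, _⟩
  simp only [sub_apply, kronecker_apply, sub_mul]

theorem Matrix.kronecker_commutator_snd [DecidableEq l] [DecidableEq n]
    (A : Matrix l l R) (B X : Matrix m m R) (C : Matrix n n R) :
    (A ⊗ₖ B ⊗ₖ C) * (1 ⊗ₖ X ⊗ₖ 1) - (1 ⊗ₖ X ⊗ₖ 1) * (A ⊗ₖ B ⊗ₖ C)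
      = A ⊗ₖ (B * X - X * B) ⊗ₖ C := by
  simp only [← mul_kronecker_mul, Matrix.mul_one, Matrix.one_mul]
  ext ⟨⟨_, _⟩, _⟩ ⟨⟨_, _⟩, _⟩
  simp only [sub_apply, kronecker_apply, sub_mul, mul_sub]

theorem Matrix.kronecker_commutator_thd [DecidableEq l] [DecidableEq m]
    (A : Matrix l l R) (B : Matrix m m R) (C X : Matrix n n R) :
    (A ⊗ₖ B ⊗ₖ C) * (1 ⊗ₖ 1 ⊗ₖ X) - (1 ⊗ₖ 1 ⊗ₖ X) * (A ⊗ₖ B ⊗ₖ C)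
      = A ⊗ₖ B ⊗ₖ (C * X - X * C) := by
  simp only [← mul_kronecker_mul, Matrix.mul_one, Matrix.one_mul]
  ext ⟨⟨_, _⟩, _⟩ ⟨⟨_, _⟩, _⟩
  simp only [sub_apply, kronecker_apply, mul_sub]

end Commutators

theorem trace_spin (j : Fin 3) : (spin j).trace = 0 := by
  fin_cases j <;> simp [spin, σx, σy, σz, trace_fin_two]

theorem trace_spin_mul_spin_of_ne {j k : Fin 3} (h : j ≠ k) : (spin j * spin k).trace = 0 := by
  fin_cases j <;> fin_cases k <;> simp_all [spin, σx, σy, σz, trace_fin_two]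

theorem trace_spin_mul_τ_of_ne {j k : Fin 3} (h : j ≠ k) : (spin j * τ k).trace = 0 := by
  simp [τ, Matrix.mul_add, trace_spin, trace_spin_mul_spin_of_ne h]

theorem τ_commutator_eq_spin_commutator (a : Fin 3) (X : Matrix (Fin 2) (Fin 2) ℂ) :
    τ a * X - X * τ a = spin a * X - X * spin a := by
  simp only [τ, Matrix.add_mul, Matrix.mul_add, Matrix.smul_mul, Matrix.mul_smul,
    Matrix.one_mul, Matrix.mul_one]
  abel

theorem trace_spin_mul_spin_commutator {a b k : Fin 3} (hk : k = a ∨ k = b) :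
    (spin k * (spin a * spin b - spin b * spin a)).trace = 0 := by
  rcases hk with rfl | rfl
  exacts [trace_mul_commutator_left_self _ _, trace_mul_commutator_right_self _ _]

theorem trace_T_mul_kronecker (P Q W : Matrix (Fin 2) (Fin 2) ℂ) :
    (T * (P ⊗ₖ Q ⊗ₖ W)).trace = ∑ j : Fin 3, ∑ k : Fin 3, ∑ l : Fin 3,
      εLC j k l * ((spin j * P).trace * (spin k * Q).trace * (spin l * W).trace) := by
  simp only [T, Finset.sum_mul, trace_sum, Matrix.smul_mul, trace_smul, ← mul_kronecker_mul,
    trace_kronecker, smul_eq_mul]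

theorem trace_T_mul_kronecker_of_trace_spin_mul_eq_zero {P Q W : Matrix (Fin 2) (Fin 2) ℂ}
    {a b : Fin 3} (hQ : ∀ k ≠ a, (spin k * Q).trace = 0) (hW : ∀ l ≠ b, (spin l * W).trace = 0) :
    (T * (P ⊗ₖ Q ⊗ₖ W)).trace = ∑ j : Fin 3,
      εLC j a b * ((spin j * P).trace * (spin a * Q).trace * (spin b * W).trace) := by
  rw [trace_T_mul_kronecker]
  refine Finset.sum_congr rfl fun j _ => ?_
  rw [Finset.sum_eq_single a (fun k _ hk => by simp [hQ k hk]) (by simp),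
    Finset.sum_eq_single b (fun l _ hl => by simp [hW l hl]) (by simp)]

/-- To first order, the system's `x`-spin is unchanged, the first reference spin only
picks up `z`-spin, and the second reference spin only picks up `y`-spin. -/
theorem first_order_changes_vanish (ρ : Matrix (Fin 2) (Fin 2) ℂ) :
    ((spin 0 ⊗ₖ (1 : Matrix (Fin 2) (Fin 2) ℂ) ⊗ₖ (1 : Matrix (Fin 2) (Fin 2) ℂ)) *
        (T * (ρ ⊗ₖ τ 1 ⊗ₖ τ 2) - (ρ ⊗ₖ τ 1 ⊗ₖ τ 2) * T)).trace = 0 ∧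
    (((1 : Matrix (Fin 2) (Fin 2) ℂ) ⊗ₖ spin 0 ⊗ₖ (1 : Matrix (Fin 2) (Fin 2) ℂ)) *
        (T * (ρ ⊗ₖ τ 1 ⊗ₖ τ 2) - (ρ ⊗ₖ τ 1 ⊗ₖ τ 2) * T)).trace = 0 ∧
    (((1 : Matrix (Fin 2) (Fin 2) ℂ) ⊗ₖ spin 1 ⊗ₖ (1 : Matrix (Fin 2) (Fin 2) ℂ)) *
        (T * (ρ ⊗ₖ τ 1 ⊗ₖ τ 2) - (ρ ⊗ₖ τ 1 ⊗ₖ τ 2) * T)).trace = 0 ∧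
    (((1 : Matrix (Fin 2) (Fin 2) ℂ) ⊗ₖ (1 : Matrix (Fin 2) (Fin 2) ℂ) ⊗ₖ spin 0) *
        (T * (ρ ⊗ₖ τ 1 ⊗ₖ τ 2) - (ρ ⊗ₖ τ 1 ⊗ₖ τ 2) * T)).trace = 0 ∧
    (((1 : Matrix (Fin 2) (Fin 2) ℂ) ⊗ₖ (1 : Matrix (Fin 2) (Fin 2) ℂ) ⊗ₖ spin 2) *
        (T * (ρ ⊗ₖ τ 1 ⊗ₖ τ 2) - (ρ ⊗ₖ τ 1 ⊗ₖ τ 2) * T)).trace = 0 := by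
  have hτ (a : Fin 3) : ∀ k ≠ a, (spin k * τ a).trace = 0 := fun _ => trace_spin_mul_τ_of_ne
  refine ⟨?_, ?_, ?_, ?_, ?_⟩ <;> rw [trace_mul_commutator_comm]
  · rw [kronecker_commutator_fst, trace_T_mul_kronecker_of_trace_spin_mul_eq_zero (hτ 1) (hτ 2),
      Fin.sum_univ_three, trace_mul_commutator_right_self]
    simp [εLC]
  · rw [kronecker_commutator_snd, τ_commutator_eq_spin_commutator,
      trace_T_mul_kronecker_of_trace_spin_mul_eq_zero (a := 2)
        (fun k hk => trace_spin_mul_spin_commutator (by omega)) (hτ 2)]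
    simp [εLC]
  · rw [kronecker_commutator_snd, τ_commutator_eq_spin_commutator, sub_self, kronecker_zero,
      zero_kronecker, Matrix.mul_zero, trace_zero]
  · rw [kronecker_commutator_thd, τ_commutator_eq_spin_commutator,
      trace_T_mul_kronecker_of_trace_spin_mul_eq_zero (b := 1)
        (hτ 1) (fun l hl => trace_spin_mul_spin_commutator (by omega))]
    simp [εLC]
  · rw [kronecker_commutator_thd, τ_commutator_eq_spin_commutator, sub_self, kronecker_zero,
      Matrix.mul_zero, trace_zero]
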